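/- (Simple Case bound for the L-surface) Let 0 < α < 1 be irrational and T = T_α the L-surface interval exchange on [0,3). Let y_1, ..., y_m be a T-orbit segment (T(y_i) = y_{i+1}). Suppose there exist an index ℓ_1 and a permutation r(ℓ_1), r*(ℓ_1), r**(ℓ_1) of {0,1,2} such that the orbit {y_i : 1 ≤ i ≤ m} is disjoint from each of the three translated special intervals r(ℓ_1)+J_k(ℓ_1), r*(ℓ_1)+J_k(ℓ_1), r**(ℓ_1)+J_k(ℓ_1). Then m ≤ 2q_{k+1} + 6. -/

import Mathlib

/-!
Let `η = |q_k α - p_k|`. By Lagrange's best approximation property, `‖dα‖ ≥ η` whenever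
`0 < |d| < q_{k+1}`, so both gaps `d*`, `d**` are at least `η` and `J_k(ℓ)` has length at least
`2η`. The points `x₀ + jα`, `0 ≤ j < q_k + q_{k+1}`, are `η`-dense modulo `1`: the index steps
`j ↦ j + q_k` (for `j < q_{k+1}`) and `j ↦ j - q_{k+1}` (otherwise) move every point in one and the
same direction, by `|q_k α - p_k|` resp. `|q_{k+1} α - p_{k+1}|`, both at most `η`, because
consecutive errors alternate in sign and decrease. Since `T_α` is the rotation by `α` modulo `1`,
an orbit segment in `[0, 3)` avoiding the three lifts `r + J_k(ℓ)` has fewer than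
`q_k + q_{k+1} ≤ 2 q_{k+1}` points.
-/

/-- `q_k`: the denominators of the continued fraction convergents of `α`. -/
noncomputable def cfq (α : ℝ) (k : ℕ) : ℝ := (GenContFract.of α).dens k

/-- `a_k`: the continued fraction digits (partial quotients) of `α`, for `k ≥ 1`. -/
noncomputable def cfa (α : ℝ) (k : ℕ) : ℝ :=
  ((GenContFract.of α).partDens.get? (k - 1)).getD 0

/-- `‖y‖`: the distance from `y` to the nearest integer. -/
noncomputable def nearestIntDist (y : ℝ) : ℝ := |y - round y|

/-- The interval exchange transformation T = T_α on [0,3) encoding the geodesic flow of slope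
1/α on the L-surface: each of the six pieces is a translation. -/
noncomputable def TL (α : ℝ) (x : ℝ) : ℝ :=
  if x < 1 - α then x + 2 + α
  else if x < 1 then x + α
  else if x < 2 - α then x + α
  else if x < 2 then x + α
  else if x < 3 - α then x + α - 2
  else x + α - 3

lemma abs_le_abs_add_of_mul_nonneg {R : Type*} [Ring R] [LinearOrder R] [IsStrictOrderedRing R]
    {a b : R} (h : 0 ≤ a * b) : |a| ≤ |a + b| := by
  rw [(abs_add_eq_add_abs_iff a b).2 (mul_nonneg_iff.1 h)]
  exact le_add_of_nonneg_right (abs_nonneg b)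

/-- Lagrange's best approximation property of two neighbouring fractions `p / q`, `p' / q'`
on opposite sides of `α`. -/
theorem abs_sub_le_abs_sub_of_isUnit {α : ℝ} {p q p' q' : ℤ} (hdet : IsUnit (p * q' - q * p'))
    (hq : 0 ≤ q) (hsign : (q * α - p) * (q' * α - p') ≤ 0) {d c : ℤ} (hd0 : d ≠ 0)
    (hd : |d| < q') : |q * α - p| ≤ |d * α - c| := by
  have hq' : 0 < q' := (abs_nonneg d).trans_lt hd
  obtain ⟨u, hu⟩ := hdet
  have hu2 : (u : ℤ) * u = 1 := by rw [← Units.val_mul, Int.units_mul_self, Units.val_one]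
  obtain ⟨x, y, hd_eq, hc_eq⟩ : ∃ x y : ℤ, d = x * q + y * q' ∧ c = x * p + y * p' :=
    ⟨u * (c * q' - d * p'), u * (d * p - c * q),
      by linear_combination (u * d : ℤ) * hu - d * hu2,
      by linear_combination (u * c : ℤ) * hu - c * hu2⟩
  have hsplit : d * α - c = x * (q * α - p) + y * (q' * α - p') := by
    rw [hd_eq, hc_eq]; push_cast; ring
  obtain rfl | hy := eq_or_ne y 0
  · have hx : x ≠ 0 := by rintro rfl; simp at hd_eq; exact hd0 hd_eq
    rw [hsplit, Int.cast_zero, zero_mul, add_zero, abs_mul]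
    exact le_mul_of_one_le_left (abs_nonneg _) (by exact_mod_cast Int.one_le_abs hx)
  obtain hxy | hxy := le_or_gt 0 (x * y)
  · -- same signs would force `|d| ≥ q'`
    have : q' ≤ |d| := calc
      q' ≤ |y| * q' := le_mul_of_one_le_left hq'.le (Int.one_le_abs hy)
      _ = |y * q'| := by rw [abs_mul, abs_of_pos hq']
      _ ≤ |y * q' + x * q| := abs_le_abs_add_of_mul_nonneg (by nlinarith [mul_nonneg hq hq'.le])
      _ = |d| := by rw [hd_eq, add_comm]
    omega
  · have hx : x ≠ 0 := by rintro rfl; simp at hxy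
    have hxy' : (x * y : ℝ) < 0 := by exact_mod_cast hxy
    calc |q * α - p| ≤ |(x : ℝ)| * |q * α - p| :=
          le_mul_of_one_le_left (abs_nonneg _) (by exact_mod_cast Int.one_le_abs hx)
      _ = |x * (q * α - p)| := (abs_mul _ _).symm
      _ ≤ |d * α - c| := by
        rw [hsplit]
        exact abs_le_abs_add_of_mul_nonneg (by nlinarith)

theorem abs_sub_le_fract_of_isUnit {α : ℝ} {p q p' q' : ℤ} (hdet : IsUnit (p * q' - q * p'))
    (hq : 0 ≤ q) (hsign : (q * α - p) * (q' * α - p') ≤ 0) {d : ℤ} (hd0 : d ≠ 0)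
    (hd : |d| < q') :
    |q * α - p| ≤ Int.fract (d * α) ∧ |q * α - p| ≤ 1 - Int.fract (d * α) := by
  constructor
  · have h := abs_sub_le_abs_sub_of_isUnit hdet hq hsign hd0 hd (c := ⌊d * α⌋)
    rwa [Int.self_sub_floor, abs_of_nonneg (Int.fract_nonneg ((d : ℝ) * α))] at h
  · have h := abs_sub_le_abs_sub_of_isUnit hdet hq hsign hd0 hd (c := ⌊d * α⌋ + 1)
    have hc : (d * α - ((⌊d * α⌋ + 1 : ℤ) : ℝ)) = Int.fract (d * α) - 1 := by
      rw [← Int.self_sub_floor]; push_cast; ring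
    rwa [hc, abs_sub_comm (Int.fract _) 1,
      abs_of_nonneg (sub_nonneg.2 (Int.fract_lt_one _).le)] at h

namespace GenContFract

theorem exists_int_contsAux (v : ℝ) : ∀ n, ∃ a b : ℤ, (GenContFract.of v).contsAux n = ⟨a, b⟩
  | 0 => ⟨1, 0, by simp [zeroth_contAux_eq_one_zero]⟩
  | 1 => ⟨⌊v⌋, 1, by simp [first_contAux_eq_h_one, of_h_eq_floor]⟩
  | n + 2 => by
    obtain ⟨a, b, hab⟩ := exists_int_contsAux v n
    obtain ⟨a', b', hab'⟩ := exists_int_contsAux v (n + 1)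
    cases hs : (GenContFract.of v).s.get? n with
    | none => exact ⟨a', b', by rw [contsAux_stable_step_of_terminated hs, hab']⟩
    | some gp =>
      obtain ⟨z, hz⟩ := exists_int_eq_of_partDen (partDen_eq_s_b hs)
      refine ⟨z * a' + a, z * b' + b, ?_⟩
      rw [contsAux_recurrence hs hab hab', of_partNum_eq_one (partNum_eq_s_a hs), hz]
      push_cast
      ring_nf

theorem one_le_dens (v : ℝ) (n : ℕ) : 1 ≤ (GenContFract.of v).dens n := by
  induction n with
  | zero => rw [zeroth_den_eq_one]
  | succ n ih => exact ih.trans of_den_mono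

theorem exists_int_eq_nums (v : ℝ) (n : ℕ) : ∃ p : ℤ, (GenContFract.of v).nums n = p := by
  obtain ⟨a, b, h⟩ := exists_int_contsAux v (n + 1)
  exact ⟨a, by rw [num_eq_conts_a, nth_cont_eq_succ_nth_contAux, h]⟩

theorem exists_nat_eq_dens (v : ℝ) (n : ℕ) : ∃ q : ℕ, 0 < q ∧ (GenContFract.of v).dens n = q := by
  obtain ⟨a, b, h⟩ := exists_int_contsAux v (n + 1)
  have hb : (GenContFract.of v).dens n = b := by
    rw [den_eq_conts_b, nth_cont_eq_succ_nth_contAux, h]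
  have hb1 : 1 ≤ b := by exact_mod_cast hb ▸ one_le_dens v n
  lift b to ℕ using by omega
  exact ⟨b, by omega, hb⟩

variable {α : ℝ}

theorem not_terminatedAt_of_irrational (hα : Irrational α) (n : ℕ) :
    ¬(GenContFract.of α).TerminatedAt n :=
  fun h ↦ hα ⟨_, ((terminates_iff_rat α).1 ⟨n, h⟩).choose_spec.symm⟩

theorem exists_dens_mul_sub_nums_succ (hα : Irrational α) (n : ℕ) :
    ∃ f ∈ Set.Ioo (0 : ℝ) 1,
      (GenContFract.of α).dens (n + 1) * α - (GenContFract.of α).nums (n + 1) =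
        -(f * ((GenContFract.of α).dens n * α - (GenContFract.of α).nums n)) := by
  obtain ⟨ifp, hifp⟩ : ∃ ifp, IntFractPair.stream α (n + 1) = some ifp :=
    Option.ne_none_iff_exists'.1 <|
      of_terminatedAt_n_iff_succ_nth_intFractPair_stream_eq_none.not.1
        (not_terminatedAt_of_irrational hα n)
  have hfr : 0 < ifp.fr := by
    refine (IntFractPair.nth_stream_fr_nonneg hifp).lt_of_ne' fun h ↦ ?_
    exact not_terminatedAt_of_irrational hα (n + 1)
      (of_terminatedAt_n_iff_succ_nth_intFractPair_stream_eq_none.2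
        (IntFractPair.stream_eq_none_of_fr_eq_zero hifp h))
  refine ⟨ifp.fr, ⟨hfr, IntFractPair.nth_stream_fr_lt_one hifp⟩, ?_⟩
  have hexact := compExactValue_correctness_of_stream_eq_some hifp
  simp only [GenContFract.compExactValue, hfr.ne', if_false, nextConts, nextNum, nextDen,
    one_mul] at hexact
  rw [← nth_cont_eq_succ_nth_contAux, ← nth_cont_eq_succ_nth_contAux] at hexact
  rw [den_eq_conts_b, den_eq_conts_b, num_eq_conts_a, num_eq_conts_a]
  have hpos : 0 < ifp.fr⁻¹ * ((GenContFract.of α).conts (n + 1)).b +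
      ((GenContFract.of α).conts n).b := by
    rw [← den_eq_conts_b, ← den_eq_conts_b]
    have := one_le_dens α n
    have := one_le_dens α (n + 1)
    positivity
  rw [eq_div_iff hpos.ne'] at hexact
  field_simp at hexact ⊢
  linarith

theorem exists_consecutive_convergents (hα : Irrational α) (k : ℕ) :
    ∃ (q q' : ℕ) (p p' : ℤ), (GenContFract.of α).dens k = q ∧
      (GenContFract.of α).dens (k + 1) = q' ∧ q ≤ q' ∧ IsUnit (p * q' - q * p') ∧
      (q * α - p) * (q' * α - p') < 0 ∧ |q' * α - p'| ≤ |q * α - p| := by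
  obtain ⟨q, hq0, hq⟩ := exists_nat_eq_dens α k
  obtain ⟨q', -, hq'⟩ := exists_nat_eq_dens α (k + 1)
  obtain ⟨p, hp⟩ := exists_int_eq_nums α k
  obtain ⟨p', hp'⟩ := exists_int_eq_nums α (k + 1)
  obtain ⟨f, ⟨hf0, hf1⟩, hrec⟩ := exists_dens_mul_sub_nums_succ hα k
  rw [hq, hq', hp, hp'] at hrec
  have hdet : p * q' - q * p' = (-1 : ℤ) ^ (k + 1) := by
    have h := SimpContFract.determinant (s := SimpContFract.of α)
      (not_terminatedAt_of_irrational hα k)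
    rw [SimpContFract.of, hq, hq', hp, hp'] at h
    exact_mod_cast h
  have he : q * α - p ≠ 0 := sub_ne_zero.2 ((hα.natCast_mul hq0.ne').ne_int p)
  refine ⟨q, q', p, p', hq, hq', ?_, hdet ▸ isUnit_neg_one.pow _, ?_, ?_⟩
  · have := of_den_mono (v := α) (n := k)
    rw [hq, hq'] at this
    exact_mod_cast this
  · rw [hrec]
    nlinarith [mul_self_pos.2 he]
  · rw [hrec, abs_neg, abs_mul, abs_of_pos hf0]
    exact mul_le_of_le_one_left (abs_nonneg _) hf1.le

end GenContFract

theorem exists_sub_sub_intCast_mem_Ioc_of_forall_step {N : ℕ} (hN : 0 < N) {u : ℕ → ℝ} {ε : ℝ}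
    (hstep : ∀ j < N, ∃ j' < N, ∃ z : ℤ, u j' - u j - z ∈ Set.Ioc 0 ε) (a : ℝ) :
    ∃ j < N, ∃ z : ℤ, u j - a - z ∈ Set.Ioc 0 ε := by
  -- the successor of the point closest behind `a` lands in `(a, a + ε]`
  obtain ⟨j₀, hj₀, hmin⟩ := (Finset.range N).exists_min_image (fun j ↦ Int.fract (a - u j))
    ⟨0, Finset.mem_range.2 hN⟩
  rw [Finset.mem_range] at hj₀
  obtain ⟨j', hj', z, hs0, hsε⟩ := hstep j₀ hj₀
  set g := Int.fract (a - u j₀)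
  have hg : a - u j₀ = g + ⌊a - u j₀⌋ := (Int.fract_add_floor _).symm
  refine ⟨j', hj', z - ⌊a - u j₀⌋, ?_, ?_⟩ <;> push_cast
  · by_contra! hle
    have hfract : Int.fract (a - u j') = g - (u j' - u j₀ - z) := by
      rw [Int.fract_eq_iff]
      refine ⟨by linarith, by linarith [Int.fract_lt_one (a - u j₀)], ⌊a - u j₀⌋ - z, ?_⟩
      push_cast
      linarith
    linarith [hmin j' (Finset.mem_range.2 hj')]
  · linarith [Int.fract_nonneg (a - u j₀)]

theorem exists_rotation_sub_sub_intCast_mem_Ioc (x₀ α : ℝ) {q q' : ℕ} {p p' : ℤ} {ε : ℝ}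
    (hq' : 0 < q') (he : q * α - p ∈ Set.Ioc 0 ε) (he' : p' - q' * α ∈ Set.Ioc 0 ε) (a : ℝ) :
    ∃ j < q + q', ∃ z : ℤ, x₀ + j * α - a - z ∈ Set.Ioc 0 ε := by
  refine exists_sub_sub_intCast_mem_Ioc_of_forall_step (by omega) (fun j hj ↦ ?_) a
  obtain hjq' | hjq' := lt_or_ge j q'
  · refine ⟨j + q, by omega, p, ?_⟩
    convert he using 1
    push_cast; ring
  · refine ⟨j - q', by omega, -p', ?_⟩
    convert he' using 1
    push_cast [Nat.cast_sub hjq']; ring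

lemma fract_mem_Ico_of_sub_intCast_mem {x A B : ℝ} (z : ℤ) (hA : 0 ≤ A) (hB : B ≤ 1)
    (h : x - z ∈ Set.Ico A B) : Int.fract x ∈ Set.Ico A B := by
  rwa [← Int.fract_sub_intCast x z, Int.fract_eq_self.2 ⟨hA.trans h.1, h.2.trans_le hB⟩]

theorem exists_fract_rotation_mem_Ico (x₀ α : ℝ) {q q' : ℕ} {p p' : ℤ} (hq' : 0 < q')
    (hsign : (q * α - p) * (q' * α - p') < 0) (hle : |q' * α - p'| ≤ |q * α - p|)
    {A B : ℝ} (hA : 0 ≤ A) (hB : B ≤ 1) (hAB : A + |q * α - p| < B) :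
    ∃ j < q + q', Int.fract (x₀ + j * α) ∈ Set.Ico A B := by
  obtain he | he := lt_or_gt_of_ne (left_ne_zero_of_mul hsign.ne)
  · have he' : 0 < q' * α - p' := pos_of_mul_neg_right hsign he.le
    rw [abs_of_neg he] at hAB
    rw [abs_of_neg he, abs_of_pos he'] at hle
    -- reflect: the rotation by `-α` steps forward
    obtain ⟨j, hj, z, ht0, htε⟩ := exists_rotation_sub_sub_intCast_mem_Ioc (-x₀) (-α) hq'
      (p := -p) (p' := -p') (ε := -(q * α - p)) ⟨by push_cast; linarith, by push_cast; linarith⟩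
      ⟨by push_cast; linarith, by push_cast; linarith⟩ (-B)
    refine ⟨j, hj, fract_mem_Ico_of_sub_intCast_mem (-z) hA hB ⟨?_, ?_⟩⟩ <;> push_cast <;> linarith
  · have he' : q' * α - p' < 0 := neg_of_mul_neg_right hsign he.le
    rw [abs_of_pos he] at hAB
    rw [abs_of_pos he, abs_of_neg he'] at hle
    obtain ⟨j, hj, z, ht0, htε⟩ := exists_rotation_sub_sub_intCast_mem_Ioc x₀ α hq'
      ⟨he, le_rfl⟩ ⟨by linarith, by linarith⟩ A
    exact ⟨j, hj, fract_mem_Ico_of_sub_intCast_mem z hA hB ⟨by linarith, by linarith⟩⟩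

theorem fract_TL (α x : ℝ) : Int.fract (TL α x) = Int.fract (x + α) := by
  unfold TL
  split_ifs <;> simp [add_right_comm x 2 α]

theorem fract_TL_orbit {α : ℝ} {m : ℕ} {y : ℕ → ℝ}
    (horb : ∀ i, 1 ≤ i → i + 1 ≤ m → TL α (y i) = y (i + 1)) :
    ∀ j, j + 1 ≤ m → Int.fract (y (j + 1)) = Int.fract (y 1 + j * α)
  | 0, _ => by simp
  | j + 1, hj => by
    obtain ⟨z, hz⟩ := Int.fract_eq_fract.1 (fract_TL_orbit horb j (by omega))
    rw [← horb (j + 1) (by omega) hj, fract_TL, Int.fract_eq_fract]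
    exact ⟨z, by push_cast; linarith⟩

lemma exists_mem_Ico_add_of_fract_mem_Ico {x A B : ℝ} (hx : x ∈ Set.Ico (0 : ℝ) 3)
    (h : Int.fract x ∈ Set.Ico A B) : ∃ r ∈ ({0, 1, 2} : Set ℝ), x ∈ Set.Ico (r + A) (r + B) := by
  have h0 : 0 ≤ ⌊x⌋ := Int.floor_nonneg.2 hx.1
  have h3 : ⌊x⌋ < 3 := Int.floor_lt.2 (by exact_mod_cast hx.2)
  refine ⟨⌊x⌋, ?_, ?_, ?_⟩
  · interval_cases ⌊x⌋ <;> norm_num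
  · linarith [Int.floor_add_fract x, h.1]
  · linarith [Int.floor_add_fract x, h.2]

theorem stmt15 (α : ℝ) (hα : Irrational α)
    (k : ℕ) (dst dss : ℝ)
    (hdss : IsLeast {x : ℝ | ∃ q : ℤ, -1 ≤ q ∧ (q : ℝ) ≤ cfq α (k + 1) - 2 ∧ q ≠ 0 ∧
      Int.fract ((q : ℝ) * α) = x} dss)
    (hdst : IsLeast {x : ℝ | ∃ q : ℤ, -1 ≤ q ∧ (q : ℝ) ≤ cfq α (k + 1) - 2 ∧ q ≠ 0 ∧
      1 - Int.fract ((q : ℝ) * α) = x} dst)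
    (m : ℕ) (y : ℕ → ℝ)
    (hy : ∀ i, 1 ≤ i → i ≤ m → y i ∈ Set.Ico (0 : ℝ) 3)
    (horb : ∀ i, 1 ≤ i → i + 1 ≤ m → TL α (y i) = y (i + 1))
    (ℓ : ℤ) (hℓ1 : 1 ≤ ℓ) (hℓ2 : (ℓ : ℝ) ≤ cfq α (k + 1) - 2)
    (r0 r1 r2 : ℝ) (hperm : ({r0, r1, r2} : Set ℝ) = {0, 1, 2})
    (hfree : ∀ i, 1 ≤ i → i ≤ m → ∀ r ∈ ({r0, r1, r2} : Set ℝ),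
      y i ∉ Set.Ico (r + Int.fract ((ℓ : ℝ) * α) - dss)
        (r + Int.fract ((ℓ : ℝ) * α) + dst)) :
    (m : ℝ) ≤ 2 * cfq α (k + 1) + 6 := by
  obtain ⟨q, q', p, p', -, hq', hqq', hdet, hsign, hle⟩ :=
    GenContFract.exists_consecutive_convergents hα k
  rw [cfq, hq'] at hdss hdst hℓ2 ⊢
  have hq'3 : (3 : ℤ) ≤ q' := by
    have : (1 : ℝ) ≤ ℓ := by exact_mod_cast hℓ1
    exact_mod_cast (by linarith : (3 : ℝ) ≤ q')
  have hgap : ∀ d : ℤ, -1 ≤ d → (d : ℝ) ≤ q' - 2 → d ≠ 0 →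
      |q * α - p| ≤ Int.fract (d * α) ∧ |q * α - p| ≤ 1 - Int.fract (d * α) := by
    intro d hd1 hd2 hd0
    have : d ≤ q' - 2 := by exact_mod_cast hd2
    exact_mod_cast abs_sub_le_fract_of_isUnit hdet (Int.natCast_nonneg q)
      (by exact_mod_cast hsign.le) hd0 (by rw [abs_lt]; omega)
  obtain ⟨d, hd1, hd2, hd0, hd⟩ := hdss.1
  obtain ⟨d', hd1', hd2', hd0', hd'⟩ := hdst.1
  have hdss_le : dss ≤ Int.fract (ℓ * α) := hdss.2 ⟨ℓ, by omega, hℓ2, by omega, rfl⟩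
  have hdst_le : dst ≤ 1 - Int.fract (ℓ * α) := hdst.2 ⟨ℓ, by omega, hℓ2, by omega, rfl⟩
  have hdss_ge : |q * α - p| ≤ dss := hd ▸ (hgap d hd1 hd2 hd0).1
  have hdst_ge : |q * α - p| ≤ dst := hd' ▸ (hgap d' hd1' hd2' hd0').2
  have he : 0 < |q * α - p| := abs_pos.2 (left_ne_zero_of_mul hsign.ne)
  by_contra! hm
  have hm' : 2 * q' + 6 < m := by exact_mod_cast hm
  obtain ⟨j, hj, hmem⟩ := exists_fract_rotation_mem_Ico (y 1) α (by omega) hsign hle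
    (A := Int.fract (ℓ * α) - dss) (B := Int.fract (ℓ * α) + dst)
    (by linarith) (by linarith) (by linarith)
  have hj1 : j + 1 ≤ m := by omega
  rw [← fract_TL_orbit horb j hj1] at hmem
  obtain ⟨r, hr, hyr⟩ := exists_mem_Ico_add_of_fract_mem_Ico (hy (j + 1) (by omega) hj1) hmem
  exact hfree (j + 1) (by omega) hj1 r (hperm ▸ hr) (by rwa [add_sub_assoc, add_assoc])
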